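/- For every real u > 0, all integers g ≥ 0, n ≥ 1 with 2g−2+n > 0 and all integers k_1,…,k_n ≥ 0, the Painlevé I amplitudes satisfy the homogeneity relation F^PI_{g;k_1,…,k_n}(u) = u^{−(5g−5+2n−(k_1+⋯+k_n))} · F^PI_{g;k_1,…,k_n}(1); moreover F^PI_{g;k_1,…,k_n}(u) ≥ 0. -/

import Mathlib

open scoped BigOperators

noncomputable section

/-- The data of a quantum Airy structure: tensors `A`, `B`, `C`, `D`.
`B α β γ` stands for `B_{α,β}^{γ}` and `C α β γ` for `C_{α}^{β,γ}`. -/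
structure AiryTensors (𝕜 : Type*) [RCLike 𝕜] (ι : Type*) where
  A : ι → ι → ι → 𝕜
  B : ι → ι → ι → 𝕜
  C : ι → ι → ι → 𝕜
  D : ι → 𝕜

/-- The sublist of `l` formed by the entries whose index lies in `s`. -/
def selectIdx {ι : Type*} (l : List ι) (s : Finset (Fin l.length)) : List ι :=
  ((List.finRange l.length).filter (fun i => decide (i ∈ s))).map l.get

/-- `F` is the family of amplitudes associated with the tensors `T`:
symmetric in its indices, vanishing when `k₁ + ⋯ + kₙ > 3g - 3 + n` (where `k = deg`),
with initial data `F_{0;α,β,γ} = A_{α,β,γ}`, `F_{1;α} = D_α`, the conventions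
`F_{0;α} = F_{0;α,β} = 0`, and satisfying the topological recursion on `2g - 2 + n`. -/
structure IsAmplitudes {𝕜 : Type*} [RCLike 𝕜] {ι : Type*} (deg : ι → ℕ)
    (T : AiryTensors 𝕜 ι) (F : ℕ → List ι → 𝕜) : Prop where
  symm : ∀ g (l l' : List ι), l.Perm l' → F g l = F g l'
  vanish : ∀ g (l : List ι), 1 ≤ l.length → 2 < 2 * g + l.length →
    3 * g + l.length < (l.map deg).sum + 3 → F g l = 0
  zero_one : ∀ α, F 0 [α] = 0
  zero_two : ∀ α β, F 0 [α, β] = 0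
  base_A : ∀ α β γ, F 0 [α, β, γ] = T.A α β γ
  base_D : ∀ α, F 1 [α] = T.D α
  recur : ∀ g (α : ι) (l : List ι), 4 ≤ 2 * g + (l.length + 1) →
    F g (α :: l) =
      (∑ m : Fin l.length, ∑' μ : ι, T.B α (l.get m) μ * F g (μ :: l.eraseIdx m.1))
      + (1/2) * ∑' μ : ι, ∑' ν : ι, T.C α μ ν *
          ((if g = 0 then 0 else F (g-1) (μ :: ν :: l))
           + ∑ g₁ ∈ Finset.range (g+1), ∑ s : Finset (Fin l.length),
               F g₁ (μ :: selectIdx l s) * F (g - g₁) (ν :: selectIdx l sᶜ))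

/-- The Painlevé I quantum Airy structure with parameter `u`. -/
def PITensors (u : ℝ) : AiryTensors ℝ ℕ where
  A i j k := if i = 0 ∧ j = 0 ∧ k = 0 then 1 / (6 * u) else 0
  B i j k := if i + j ≤ k + 1 then
      (Nat.doubleFactorial (2*k+1) : ℝ) / (2 * (3*u) ^ (k + 2 - (i + j)) * (Nat.doubleFactorial (2*i+1) : ℝ) * (Nat.doubleFactorial (2*j-1) : ℝ))
    else 0
  C i j k := if i ≤ j + k + 2 then
      ((Nat.doubleFactorial (2*j+1) : ℝ) * (Nat.doubleFactorial (2*k+1) : ℝ)) / (2 * (3*u) ^ (j + k + 3 - i) * (Nat.doubleFactorial (2*i+1) : ℝ))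
    else 0
  D i := (if i = 0 then 1 / (16 * (3*u)^2) else 0) + (if i = 1 then 1 / (48 * (3*u)) else 0)

/-- The Airy quantum Airy structure. -/
def AiryT : AiryTensors ℝ ℕ where
  A i j k := if i = 0 ∧ j = 0 ∧ k = 0 then 1 else 0
  B i j k := if i + j = k + 1 then (Nat.doubleFactorial (2*k+1) : ℝ) / ((Nat.doubleFactorial (2*i+1) : ℝ) * (Nat.doubleFactorial (2*j-1) : ℝ)) else 0
  C i j k := if i = j + k + 2 then ((Nat.doubleFactorial (2*j+1) : ℝ) * (Nat.doubleFactorial (2*k+1) : ℝ)) / (Nat.doubleFactorial (2*i+1) : ℝ) else 0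
  D i := if i = 1 then 1 / 24 else 0

/-- The quantum Airy structure of a (local) spectral curve with ramification points `𝔞`,
built from the expansion coefficients `θ` (with `θ a m = 0` for `m < 0`) and `φ`. -/
def genTensors {𝕜 : Type*} [RCLike 𝕜] {𝔞 : Type*} [DecidableEq 𝔞]
    (θ : 𝔞 → ℤ → 𝕜) (φ : 𝔞 × ℕ → 𝔞 × ℕ → 𝕜) : AiryTensors 𝕜 (𝔞 × ℕ) where
  A α β γ := if α.1 = β.1 ∧ β.1 = γ.1 ∧ α.2 = 0 ∧ β.2 = 0 ∧ γ.2 = 0 then θ α.1 0 else 0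
  B α β γ :=
    (if α.1 = β.1 ∧ β.1 = γ.1 then
        θ α.1 ((γ.2 : ℤ) - α.2 - β.2 + 1) * (Nat.doubleFactorial (2*γ.2+1) : 𝕜)
          / ((Nat.doubleFactorial (2*α.2+1) : 𝕜) * (Nat.doubleFactorial (2*β.2-1) : 𝕜))
      else 0)
    + (if α.1 = β.1 ∧ α.2 = 0 ∧ β.2 = 0 then
        θ α.1 0 * φ (α.1, 0) γ * (Nat.doubleFactorial (2*γ.2-1) : 𝕜) else 0)
  C α β γ :=
    (if α.1 = β.1 ∧ β.1 = γ.1 then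
        θ α.1 ((β.2 : ℤ) + γ.2 - α.2 + 2) * ((Nat.doubleFactorial (2*β.2+1) : 𝕜) * (Nat.doubleFactorial (2*γ.2+1) : 𝕜))
          / (Nat.doubleFactorial (2*α.2+1) : 𝕜)
      else 0)
    + (if α.1 = β.1 then
        (∑ m ∈ Finset.range (β.2 + 2 - α.2), θ α.1 (m : ℤ) * φ (α.1, β.2 + 1 - α.2 - m) γ)
          * ((Nat.doubleFactorial (2*β.2+1) : 𝕜) * (Nat.doubleFactorial (2*γ.2-1) : 𝕜)) / (Nat.doubleFactorial (2*α.2+1) : 𝕜)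
      else 0)
    + (if α.1 = γ.1 then
        (∑ m ∈ Finset.range (γ.2 + 2 - α.2), θ α.1 (m : ℤ) * φ (α.1, γ.2 + 1 - α.2 - m) β)
          * ((Nat.doubleFactorial (2*β.2-1) : 𝕜) * (Nat.doubleFactorial (2*γ.2+1) : 𝕜)) / (Nat.doubleFactorial (2*α.2+1) : 𝕜)
      else 0)
    + (if α.2 = 0 then
        θ α.1 0 * φ (α.1, 0) β * φ (α.1, 0) γ * ((Nat.doubleFactorial (2*β.2-1) : 𝕜) * (Nat.doubleFactorial (2*γ.2-1) : 𝕜))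
      else 0)
  D α :=
    (if α.2 = 0 then θ α.1 0 * φ (α.1, 0) (α.1, 0) / 2 + θ α.1 1 / 8 else 0)
    + (if α.2 = 1 then θ α.1 0 / 24 else 0)

/-- The function `P` from the upper bound on Painlevé I amplitudes. -/
def Pfun (u : ℝ) : ℝ := if u < 2/5 then 2 / (5 * u^2) else 5 / (10 * u - 2)



/-!
The Painlevé I tensors are homogeneous in `u`: `A_{i,j,k}`, `B_{i,j}^k`, `C_i^{j,k}`, `D_i` scale
as `u` to the powers `i + j + k - 1`, `i + j - k - 2`, `i - j - k - 3`, `i - 2`. For any tensors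
that are homogeneous in this sense (with respect to a weight `w` on the indices), an induction on
`2g - 2 + n` along the recursion gives `F_{g;k₁,…,kₙ}(u) = u ^ (∑ w kᵢ - (5g - 5 + 2n)) F_{g;k₁,…,kₙ}(1)`,
since both sides of every term of the recursion carry the same total exponent. Nonnegativity
follows in the same way, because the tensors are nonnegative and the recursion only adds and
multiplies. In the quadratic term one factor may have the same `2g - 2 + n` as the left-hand side,
but then the other factor is `F_{0;k}`, which vanishes.
-/

variable {ι : Type*}

lemma toFinset_filter_mem_finRange {n : ℕ} (s : Finset (Fin n)) :
    ((List.finRange n).filter (fun i => decide (i ∈ s))).toFinset = s := by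
  ext i
  simp

lemma length_selectIdx (l : List ι) (s : Finset (Fin l.length)) :
    (selectIdx l s).length = s.card := by
  rw [selectIdx, List.length_map, ← List.toFinset_card_of_nodup ((List.nodup_finRange _).filter _),
    toFinset_filter_mem_finRange]

lemma sum_map_selectIdx {M : Type*} [AddCommMonoid M] (f : ι → M) (l : List ι)
    (s : Finset (Fin l.length)) : ((selectIdx l s).map f).sum = ∑ i ∈ s, f l[i] := by
  rw [selectIdx, List.map_map, ← List.sum_toFinset _ ((List.nodup_finRange _).filter _),
    toFinset_filter_mem_finRange]
  rfl

lemma length_selectIdx_add_compl (l : List ι) (s : Finset (Fin l.length)) :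
    (selectIdx l s).length + (selectIdx l sᶜ).length = l.length := by
  rw [length_selectIdx, length_selectIdx, Finset.card_add_card_compl, Fintype.card_fin]

lemma sum_map_selectIdx_add_compl {M : Type*} [AddCommMonoid M] (f : ι → M) (l : List ι)
    (s : Finset (Fin l.length)) :
    ((selectIdx l s).map f).sum + ((selectIdx l sᶜ).map f).sum = (l.map f).sum := by
  rw [sum_map_selectIdx, sum_map_selectIdx, Finset.sum_add_sum_compl]
  exact Fin.sum_univ_fun_getElem l f

def ampDegree (w : ι → ℤ) (g : ℕ) (l : List ι) : ℤ :=
  (l.map w).sum - (5 * g - 5 + 2 * l.length)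

section ampDegree

variable (w : ι → ℤ)

lemma ampDegree_cons_eraseIdx (g : ℕ) (α μ : ι) (t : List ι) (m : Fin t.length) :
    ampDegree w g (μ :: t.eraseIdx m) = ampDegree w g (α :: t) - (w α + w t[m] - w μ - 2) := by
  have hm := m.isLt
  have hsum := List.CommMonoid.add_sum_eraseIdx (l := t.map w) (i := m) (by simp [hm])
  rw [List.eraseIdx_map] at hsum
  simp only [ampDegree, List.map_cons, List.sum_cons, List.length_cons,
    List.length_eraseIdx_of_lt hm, List.getElem_map, Fin.getElem_fin] at hsum ⊢
  omega

lemma ampDegree_pred (g : ℕ) (hg : g ≠ 0) (μ ν : ι) (l : List ι) :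
    ampDegree w (g - 1) (μ :: ν :: l) = ampDegree w g (μ :: ν :: l) + 5 := by
  simp only [ampDegree]
  push_cast [Nat.one_le_iff_ne_zero.mpr hg]
  ring

lemma ampDegree_add_ampDegree_selectIdx {g₁ g : ℕ} (hg₁ : g₁ ≤ g) (μ ν : ι) (l : List ι)
    (s : Finset (Fin l.length)) :
    ampDegree w g₁ (μ :: selectIdx l s) + ampDegree w (g - g₁) (ν :: selectIdx l sᶜ)
      = ampDegree w g (μ :: ν :: l) + 5 := by
  have hlen := length_selectIdx_add_compl l s
  have hsum := sum_map_selectIdx_add_compl w l s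
  simp only [ampDegree, List.map_cons, List.sum_cons, List.length_cons]
  push_cast [hg₁]
  omega

lemma ampDegree_cons_cons (g : ℕ) (α μ ν : ι) (t : List ι) :
    (w α - w μ - w ν - 3) + (ampDegree w g (μ :: ν :: t) + 5) = ampDegree w g (α :: t) := by
  simp only [ampDegree, List.map_cons, List.sum_cons, List.length_cons]
  push_cast
  ring

end ampDegree

theorem amplitude_induction {P : ℕ → List ι → Prop}
    (unstable : ∀ α t, t.length ≤ 1 → P 0 (α :: t))
    (base_A : ∀ a b c, P 0 [a, b, c]) (base_D : ∀ a, P 1 [a])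
    (step : ∀ g α t, 3 ≤ 2 * g + t.length →
      (∀ g' α' t', 2 * g' + t'.length < 2 * g + t.length → P g' (α' :: t')) → P g (α :: t))
    (g : ℕ) (α : ι) (t : List ι) : P g (α :: t) := by
  induction hm : 2 * g + t.length using Nat.strong_induction_on generalizing g α t with
  | _ m ih =>
  rcases lt_or_ge m 3 with hm3 | hm3
  · rcases g with _ | _ | g
    · match t with
      | [] | [_] => exact unstable _ _ (by simp)
      | [b, c] => exact base_A α b c
      | _ :: _ :: _ :: _ => simp only [List.length_cons] at hm; omega
    · match t with
      | [] => exact base_D α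
      | _ :: _ => simp only [List.length_cons] at hm; omega
    · omega
  · exact step g α t (hm ▸ hm3) fun g' α' t' h => ih _ (hm ▸ h) g' α' t' rfl

lemma selectIdx_cases {g₁ g : ℕ} (hg₁ : g₁ ≤ g) (l : List ι) (s : Finset (Fin l.length)) :
    (g₁ = 0 ∧ (selectIdx l s).length ≤ 1) ∨ (g - g₁ = 0 ∧ (selectIdx l sᶜ).length ≤ 1) ∨
      (2 * g₁ + (selectIdx l s).length < 2 * g + l.length ∧
        2 * (g - g₁) + (selectIdx l sᶜ).length < 2 * g + l.length) := by
  have := length_selectIdx_add_compl l s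
  omega

def splitTerm {R : Type*} [Semiring R] (F : ℕ → List ι → R) (g : ℕ) (μ ν : ι) (l : List ι) : R :=
  (if g = 0 then 0 else F (g - 1) (μ :: ν :: l))
    + ∑ g₁ ∈ Finset.range (g + 1), ∑ s : Finset (Fin l.length),
        F g₁ (μ :: selectIdx l s) * F (g - g₁) (ν :: selectIdx l sᶜ)

namespace IsAmplitudes

variable {𝕜 : Type*} [RCLike 𝕜] {deg : ι → ℕ} {T : AiryTensors 𝕜 ι} {F : ℕ → List ι → 𝕜}

lemma recur_of_le (hF : IsAmplitudes deg T F) {g : ℕ} (α : ι) {l : List ι}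
    (h : 3 ≤ 2 * g + l.length) :
    F g (α :: l) = (∑ m : Fin l.length, ∑' μ, T.B α l[m] μ * F g (μ :: l.eraseIdx m))
      + 1 / 2 * ∑' μ, ∑' ν, T.C α μ ν * splitTerm F g μ ν l :=
  hF.recur g α l (by omega)

lemma apply_zero_cons (hF : IsAmplitudes deg T F) (α : ι) {t : List ι} (ht : t.length ≤ 1) :
    F 0 (α :: t) = 0 :=
  match t, ht with
  | [], _ => hF.zero_one α
  | [β], _ => hF.zero_two α β

lemma splitTerm_nonneg {T : AiryTensors ℝ ι} {F : ℕ → List ι → ℝ} (hF : IsAmplitudes deg T F)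
    {g : ℕ} (μ ν : ι) {l : List ι}
    (ih : ∀ g' α' t', 2 * g' + t'.length < 2 * g + l.length → 0 ≤ F g' (α' :: t')) :
    0 ≤ splitTerm F g μ ν l := by
  refine add_nonneg ?_ (Finset.sum_nonneg fun g₁ hg₁ => Finset.sum_nonneg fun s _ => ?_)
  · split_ifs with hg
    · exact le_rfl
    · exact ih _ _ _ (by simp only [List.length_cons]; omega)
  · rcases selectIdx_cases (Nat.lt_succ_iff.mp (Finset.mem_range.mp hg₁)) l s with
      ⟨rfl, h⟩ | ⟨hg, h⟩ | ⟨h₁, h₂⟩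
    · rw [hF.apply_zero_cons μ h, zero_mul]
    · rw [hg, hF.apply_zero_cons ν h, mul_zero]
    · exact mul_nonneg (ih _ _ _ h₁) (ih _ _ _ h₂)

theorem nonneg {T : AiryTensors ℝ ι} {F : ℕ → List ι → ℝ} (hF : IsAmplitudes deg T F)
    (hA : ∀ a b c, 0 ≤ T.A a b c) (hB : ∀ a b c, 0 ≤ T.B a b c) (hC : ∀ a b c, 0 ≤ T.C a b c)
    (hD : ∀ a, 0 ≤ T.D a) (g : ℕ) (α : ι) (t : List ι) : 0 ≤ F g (α :: t) := by
  refine amplitude_induction (P := fun g l => 0 ≤ F g l)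
    (fun α t ht => (hF.apply_zero_cons α ht).ge) (fun a b c => hF.base_A a b c ▸ hA a b c)
    (fun a => hF.base_D a ▸ hD a) (fun g α t hm ih => ?_) g α t
  rw [hF.recur_of_le α hm]
  refine add_nonneg (Finset.sum_nonneg fun m _ => tsum_nonneg fun μ => ?_)
    (mul_nonneg (by norm_num) (tsum_nonneg fun μ => tsum_nonneg fun ν =>
      mul_nonneg (hC _ _ _) (hF.splitTerm_nonneg μ ν ih)))
  refine mul_nonneg (hB _ _ _) (ih _ _ _ ?_)
  have := m.isLt
  rw [List.length_eraseIdx_of_lt this]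
  omega

section Homogeneity

variable {deg' : ι → ℕ} {T' : AiryTensors 𝕜 ι} {F' : ℕ → List ι → 𝕜} {u : 𝕜} {w : ι → ℤ}

lemma splitTerm_eq_zpow_mul (hF : IsAmplitudes deg T F) (hF' : IsAmplitudes deg' T' F')
    (hu : u ≠ 0) {g : ℕ} (μ ν : ι) {l : List ι}
    (ih : ∀ g' α' t', 2 * g' + t'.length < 2 * g + l.length →
      F g' (α' :: t') = u ^ ampDegree w g' (α' :: t') * F' g' (α' :: t')) :
    splitTerm F g μ ν l = u ^ (ampDegree w g (μ :: ν :: l) + 5) * splitTerm F' g μ ν l := by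
  simp only [splitTerm, mul_add, Finset.mul_sum]
  congr 1
  · split_ifs with hg
    · rw [mul_zero]
    · rw [ih _ _ _ (by simp only [List.length_cons]; omega), ampDegree_pred w g hg]
  · refine Finset.sum_congr rfl fun g₁ hg₁ => Finset.sum_congr rfl fun s _ => ?_
    have hg₁ := Nat.lt_succ_iff.mp (Finset.mem_range.mp hg₁)
    rcases selectIdx_cases hg₁ l s with ⟨rfl, h⟩ | ⟨hg, h⟩ | ⟨h₁, h₂⟩
    · simp [hF.apply_zero_cons μ h, hF'.apply_zero_cons μ h]
    · simp [hg, hF.apply_zero_cons ν h, hF'.apply_zero_cons ν h]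
    · rw [ih _ _ _ h₁, ih _ _ _ h₂, mul_mul_mul_comm, ← zpow_add₀ hu,
        ampDegree_add_ampDegree_selectIdx w hg₁]

theorem eq_zpow_mul (hF : IsAmplitudes deg T F) (hF' : IsAmplitudes deg' T' F') (hu : u ≠ 0)
    (hA : ∀ a b c, T.A a b c = u ^ (w a + w b + w c - 1) * T'.A a b c)
    (hB : ∀ a b c, T.B a b c = u ^ (w a + w b - w c - 2) * T'.B a b c)
    (hC : ∀ a b c, T.C a b c = u ^ (w a - w b - w c - 3) * T'.C a b c)
    (hD : ∀ a, T.D a = u ^ (w a - 2) * T'.D a) (g : ℕ) (α : ι) (t : List ι) :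
    F g (α :: t) = u ^ ampDegree w g (α :: t) * F' g (α :: t) := by
  refine amplitude_induction (P := fun g l => F g l = u ^ ampDegree w g l * F' g l)
    (fun α t ht => by simp [hF.apply_zero_cons α ht, hF'.apply_zero_cons α ht])
    (fun a b c => by
      rw [hF.base_A, hF'.base_A, hA, ampDegree]
      congr 2
      simp only [List.map_cons, List.map_nil, List.sum_cons, List.sum_nil, List.length_cons,
        List.length_nil]
      push_cast
      ring)
    (fun a => by rw [hF.base_D, hF'.base_D, hD]; congr 2; simp [ampDegree])
    (fun g α t hm ih => ?_) g α t
  beta_reduce at ih ⊢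
  have hBterm : ∀ (m : Fin t.length) μ, T.B α t[m] μ * F g (μ :: t.eraseIdx m)
      = u ^ ampDegree w g (α :: t) * (T'.B α t[m] μ * F' g (μ :: t.eraseIdx m)) := by
    intro m μ
    have := m.isLt
    rw [hB, ih _ _ _ (by rw [List.length_eraseIdx_of_lt this]; omega), mul_mul_mul_comm,
      ← zpow_add₀ hu, ampDegree_cons_eraseIdx w g α, add_sub_cancel]
  have hCterm : ∀ μ ν, T.C α μ ν * splitTerm F g μ ν t
      = u ^ ampDegree w g (α :: t) * (T'.C α μ ν * splitTerm F' g μ ν t) := by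
    intro μ ν
    rw [hC, hF.splitTerm_eq_zpow_mul hF' hu μ ν ih, mul_mul_mul_comm, ← zpow_add₀ hu,
      ampDegree_cons_cons]
  rw [hF.recur_of_le α hm, hF'.recur_of_le α hm]
  simp only [hBterm, hCterm, tsum_mul_left, ← Finset.mul_sum]
  ring

end Homogeneity

end IsAmplitudes

section PainleveI

variable {u : ℝ}

lemma PITensors_A_nonneg (hu : 0 < u) (i j k : ℕ) : 0 ≤ (PITensors u).A i j k := by
  simp only [PITensors]
  split_ifs <;> positivity

lemma PITensors_B_nonneg (hu : 0 < u) (i j k : ℕ) : 0 ≤ (PITensors u).B i j k := by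
  simp only [PITensors]
  split_ifs <;> positivity

lemma PITensors_C_nonneg (hu : 0 < u) (i j k : ℕ) : 0 ≤ (PITensors u).C i j k := by
  simp only [PITensors]
  split_ifs <;> positivity

lemma PITensors_D_nonneg (hu : 0 < u) (i : ℕ) : 0 ≤ (PITensors u).D i := by
  simp only [PITensors]
  split_ifs <;> positivity

lemma PITensors_A_eq_zpow_mul (i j k : ℕ) :
    (PITensors u).A i j k = u ^ ((i : ℤ) + j + k - 1) * (PITensors 1).A i j k := by
  simp only [PITensors]
  split_ifs with h
  · obtain ⟨rfl, rfl, rfl⟩ := h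
    simp
  · rw [mul_zero]

lemma PITensors_B_eq_zpow_mul (i j k : ℕ) :
    (PITensors u).B i j k = u ^ ((i : ℤ) + j - k - 2) * (PITensors 1).B i j k := by
  simp only [PITensors]
  split_ifs with h
  · rw [show (i : ℤ) + j - k - 2 = -((k + 2 - (i + j) : ℕ) : ℤ) by omega, zpow_neg, zpow_natCast,
      mul_pow, mul_one]
    ring
  · rw [mul_zero]

lemma PITensors_C_eq_zpow_mul (i j k : ℕ) :
    (PITensors u).C i j k = u ^ ((i : ℤ) - j - k - 3) * (PITensors 1).C i j k := by
  simp only [PITensors]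
  split_ifs with h
  · rw [show (i : ℤ) - j - k - 3 = -((j + k + 3 - i : ℕ) : ℤ) by omega, zpow_neg, zpow_natCast,
      mul_pow, mul_one]
    ring
  · rw [mul_zero]

lemma PITensors_D_eq_zpow_mul (i : ℕ) :
    (PITensors u).D i = u ^ ((i : ℤ) - 2) * (PITensors 1).D i := by
  simp only [PITensors]
  rcases lt_or_ge i 2 with hi | hi
  · interval_cases i <;> simp [mul_pow, zpow_neg] <;> ring
  · simp [show i ≠ 0 by omega, show i ≠ 1 by omega]

end PainleveI

/-- homogeneity in `u` and nonnegativity of the Painlevé I amplitudes. -/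
theorem stmt_9 (FPI : ℝ → ℕ → List ℕ → ℝ)
    (hFPI : ∀ u : ℝ, 0 < u → IsAmplitudes id (PITensors u) (FPI u)) :
    ∀ u : ℝ, 0 < u → ∀ (g n : ℕ), 1 ≤ n → 2 < 2 * g + n → ∀ k : Fin n → ℕ,
      FPI u g (List.ofFn k)
          = u ^ (-(5 * (g : ℤ) - 5 + 2 * n - ∑ i : Fin n, (k i : ℤ))) *
              FPI 1 g (List.ofFn k) ∧
        0 ≤ FPI u g (List.ofFn k) := by
  intro u hu g n hn _ k
  have hdeg : ampDegree Nat.cast g (List.ofFn k)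
      = -(5 * (g : ℤ) - 5 + 2 * n - ∑ i : Fin n, (k i : ℤ)) := by
    simp only [ampDegree, List.map_ofFn, List.sum_ofFn, List.length_ofFn, Function.comp_apply]
    ring
  obtain ⟨α, t, hk⟩ := List.exists_cons_of_ne_nil (l := List.ofFn k)
    (List.ne_nil_of_length_pos (by rwa [List.length_ofFn]))
  rw [← hdeg, hk]
  exact ⟨(hFPI u hu).eq_zpow_mul (hFPI 1 one_pos) hu.ne' PITensors_A_eq_zpow_mul
      PITensors_B_eq_zpow_mul PITensors_C_eq_zpow_mul PITensors_D_eq_zpow_mul g α t,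
    (hFPI u hu).nonneg (PITensors_A_nonneg hu) (PITensors_B_nonneg hu) (PITensors_C_nonneg hu)
      (PITensors_D_nonneg hu) g α t⟩
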